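/- Let G_1=(V_1,E_1) and G_2=(V_2,E_2) be finite simple graphs with V_1 ∩ V_2 ≠ ∅ inducing the same subgraph H on V_1 ∩ V_2, let K be a field, and let G = G_1 #_H G_2 be their H-sum. Suppose H has a vertex v with deg_H(v) = |V_1 ∩ V_2| − 1 (i.e. v is adjacent in H to every other vertex of V_1 ∩ V_2). Then for i = 1,2 the cut algebra K[G_i] is an algebra retract of K[G], and moreover if V_{3−i} ∖ V_i ≠ ∅ then G_i is a neighborhood-minor of G. In particular, for i = 1,2, K[G_i] is an algebra retract of the cut algebra of any clique-sum of G_1 and G_2 (the case where H is a complete graph). -/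

import Mathlib

open scoped Classical

noncomputable section

namespace CutPaper

open MvPolynomial

/-- An edge `e` is cut by the partition `A | Aᶜ` if it has exactly one endpoint in `A`. -/
def IsCutEdge {V : Type} (A : Set V) (e : Sym2 V) : Prop :=
  ∃ u v : V, e = s(u, v) ∧ u ∈ A ∧ v ∉ A

/-- The cut set of `A`: all edges of `G` with exactly one endpoint in `A`. -/
def cutSet {V : Type} (G : SimpleGraph V) (A : Set V) : Set (Sym2 V) :=
  {e ∈ G.edgeSet | IsCutEdge A e}

lemma isCutEdge_compl {V : Type} (A : Set V) (e : Sym2 V) :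
    IsCutEdge Aᶜ e ↔ IsCutEdge A e := by
  constructor <;> rintro ⟨u, v, rfl, hu, hv⟩
  · exact ⟨v, u, Sym2.eq_swap, Set.notMem_compl_iff.mp hv, hu⟩
  · exact ⟨v, u, Sym2.eq_swap, hv, not_not_intro hu⟩

/-- Two subsets determine the same unordered partition `A | Aᶜ` of `V`
iff they are equal or complementary. -/
def partitionSetoid (V : Type) : Setoid (Set V) where
  r A B := B = A ∨ B = Aᶜ
  iseqv := by
    refine ⟨fun A => Or.inl rfl, @fun A B h => ?_, @fun A B C h1 h2 => ?_⟩
    · rcases h with rfl | rfl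
      · exact Or.inl rfl
      · exact Or.inr (compl_compl A).symm
    · rcases h1 with rfl | rfl <;> rcases h2 with rfl | rfl
      · exact Or.inl rfl
      · exact Or.inr rfl
      · exact Or.inr rfl
      · exact Or.inl (compl_compl A)

/-- The unordered partitions `A | Aᶜ` of `V`, indexing the variables of `S_G`. -/
abbrev Partition (V : Type) := Quotient (partitionSetoid V)

variable (K : Type) [CommRing K]

/-- The variable `q_{A|Aᶜ}` of the polynomial ring `S_G`. -/
def qPart {V : Type} (A : Set V) : MvPolynomial (Partition V) K :=
  X (Quotient.mk (partitionSetoid V) A)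

/-- The monomial `u_A = ∏_{e ∈ Cut(A)} s_e · ∏_{e ∈ E \ Cut(A)} t_e`;
the variable `s_e` is `X (true, e)` and `t_e` is `X (false, e)`. -/
def cutMonomial {V : Type} [Finite V] (G : SimpleGraph V) (A : Set V) :
    MvPolynomial (Bool × Sym2 V) K :=
  ∏ e ∈ (Set.toFinite G.edgeSet).toFinset,
    if IsCutEdge A e then X (true, e) else X (false, e)

lemma cutMonomial_compl {V : Type} [Finite V] (G : SimpleGraph V) (A : Set V) :
    cutMonomial K G Aᶜ = cutMonomial K G A := by
  unfold cutMonomial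
  refine Finset.prod_congr rfl fun e _ => ?_
  by_cases h : IsCutEdge A e
  · rw [if_pos ((isCutEdge_compl A e).mpr h), if_pos h]
  · rw [if_neg fun hc => h ((isCutEdge_compl A e).mp hc), if_neg h]

/-- The `K`-algebra homomorphism `φ_G : S_G → R_G`, `q_{A|Aᶜ} ↦ u_A`. -/
def phi {V : Type} [Finite V] (G : SimpleGraph V) :
    MvPolynomial (Partition V) K →ₐ[K] MvPolynomial (Bool × Sym2 V) K :=
  aeval fun p : Partition V =>
    Quotient.lift (cutMonomial K G)
      (fun A B hAB => by
        have h : B = A ∨ B = Aᶜ := hAB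
        rcases h with rfl | rfl
        · rfl
        · exact (cutMonomial_compl K G A).symm) p

/-- The cut ideal `I_G = ker φ_G`. -/
def cutIdeal {V : Type} [Finite V] (G : SimpleGraph V) :
    Ideal (MvPolynomial (Partition V) K) :=
  RingHom.ker (phi K G)

/-- The cut algebra `K[G]`, i.e. the image of `φ_G`: the `K`-subalgebra of `R_G`
generated by the monomials `u_A`. -/
def cutAlgebra {V : Type} [Finite V] (G : SimpleGraph V) :
    Subalgebra K (MvPolynomial (Bool × Sym2 V) K) :=
  Algebra.adjoin K {m | ∃ A : Set V, m = cutMonomial K G A}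

/-- The generator `u_A` of the cut algebra, as an element of the cut algebra. -/
def uGen {V : Type} [Finite V] (G : SimpleGraph V) (A : Set V) : ↥(cutAlgebra K G) :=
  ⟨cutMonomial K G A, Algebra.subset_adjoin ⟨A, rfl⟩⟩

/-- An element of `S_G/I` is homogeneous of degree `d` if it is the class of a homogeneous
polynomial of degree `d`. -/
def QuotHomogeneous {σ : Type} (I : Ideal (MvPolynomial σ K)) (d : ℕ)
    (x : MvPolynomial σ K ⧸ I) : Prop :=
  ∃ f : MvPolynomial σ K, f.IsHomogeneous d ∧ Ideal.Quotient.mk I f = x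

/-- The cut algebra of `H` is an algebra retract of the cut algebra of `G`:
there are homogeneous `K`-algebra homomorphisms `ι : K[H] → K[G]` (injective) and
`π : K[G] → K[H]` with `π ∘ ι = id`. -/
def CutAlgebraRetract {V W : Type} [Finite V] [Finite W]
    (H : SimpleGraph W) (G : SimpleGraph V) : Prop :=
  ∃ (ι : (MvPolynomial (Partition W) K ⧸ cutIdeal K H) →ₐ[K]
      (MvPolynomial (Partition V) K ⧸ cutIdeal K G))
    (π : (MvPolynomial (Partition V) K ⧸ cutIdeal K G) →ₐ[K]
      (MvPolynomial (Partition W) K ⧸ cutIdeal K H)),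
    Function.Injective ι ∧
    (∀ d x, QuotHomogeneous K (cutIdeal K H) d x →
      ∃ d', QuotHomogeneous K (cutIdeal K G) d' (ι x)) ∧
    (∀ d x, QuotHomogeneous K (cutIdeal K G) d x →
      ∃ d', QuotHomogeneous K (cutIdeal K H) d' (π x)) ∧
    π.comp ι = AlgHom.id K _

/-- The graph obtained from `G` by contracting the edge `{u, v}`: the vertex `u` is removed
and merged into `v`. -/
def contractEdge {V : Type} (G : SimpleGraph V) (u v : V) :
    SimpleGraph {x : V // x ≠ u} where
  Adj a b := a ≠ b ∧
    (G.Adj a b ∨ ((a : V) = v ∧ G.Adj u b) ∨ ((b : V) = v ∧ G.Adj a u))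
  symm := ⟨by
    rintro a b ⟨hne, h | ⟨ha, h⟩ | ⟨hb, h⟩⟩
    · exact ⟨hne.symm, Or.inl h.symm⟩
    · exact ⟨hne.symm, Or.inr (Or.inr ⟨ha, h.symm⟩)⟩
    · exact ⟨hne.symm, Or.inr (Or.inl ⟨hb, h.symm⟩)⟩⟩
  loopless := ⟨fun a h => h.1 rfl⟩

/-- The induced subgraph `G_W` is a neighborhood-minor of `G`: `W` and `W' = Wᶜ` are nonempty
and there is a vertex `v ∈ W` with `W ∩ N_G(W') ⊆ N_{G_W}[v]`. -/
def IsNeighborhoodMinor {V : Type} (G : SimpleGraph V) (W : Set V) : Prop :=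
  W.Nonempty ∧ Wᶜ.Nonempty ∧
    ∃ v ∈ W, ∀ x ∈ W, (∃ y ∈ Wᶜ, G.Adj y x) → x = v ∨ G.Adj v x

/-- The cut vector `δ_A ∈ {0,1}^E` of the partition `A | Aᶜ`. -/
def cutVector {V : Type} (G : SimpleGraph V) (A : Set V) : ↥G.edgeSet → ℝ :=
  fun e => if IsCutEdge A (e : Sym2 V) then 1 else 0

/-- The cut polytope `Cut^□(G) ⊆ ℝ^E`: the convex hull of the cut vectors. -/
def cutPolytope {V : Type} (G : SimpleGraph V) : Set (↥G.edgeSet → ℝ) :=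
  convexHull ℝ {x | ∃ A : Set V, x = cutVector G A}

/-- `F` is a face of `P`: either a trivial face (`P` or `∅`), or the intersection of `P`
with a supporting hyperplane. -/
def IsFace {α : Type} (P F : Set (α → ℝ)) : Prop :=
  F = P ∨ F = ∅ ∨
    ∃ (φ : (α → ℝ) →ₗ[ℝ] ℝ) (c : ℝ), φ ≠ 0 ∧
      (∀ x ∈ P, φ x ≤ c) ∧ F = P ∩ {x | φ x = c}

/-- `P` and `Q` are affinely isomorphic: there is a bijective map from `P` onto `Q`
extending to an affine map. -/
def AffinelyIsomorphic {α β : Type} (P : Set (α → ℝ)) (Q : Set (β → ℝ)) : Prop :=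
  ∃ f : (α → ℝ) →ᵃ[ℝ] (β → ℝ), Set.InjOn f P ∧ f '' P = Q

/-- The monomial `z · ∏_{e ∈ Cut(A)} y_e` of the polytopal algebra of the cut polytope;
the variable `z` is `X none` and `y_e` is `X (some e)`. -/
def polytopeMonomial {V : Type} [Finite V] (G : SimpleGraph V) (A : Set V) :
    MvPolynomial (Option (Sym2 V)) K :=
  X none * ∏ e ∈ (Set.toFinite (cutSet G A)).toFinset, X (some e)

/-- The polytopal algebra `K[Cut^□(G)]`: the subalgebra of `K[y_e (e ∈ E), z]` generated by
the monomials `z · y^{δ_A}` attached to the lattice points (= cut vectors) of `Cut^□(G)`. -/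
def polytopalAlgebra {V : Type} [Finite V] (G : SimpleGraph V) :
    Subalgebra K (MvPolynomial (Option (Sym2 V)) K) :=
  Algebra.adjoin K {m | ∃ A : Set V, m = polytopeMonomial K G A}

/-- `G'` is a combinatorial retract of `G`: it is obtained from `G` by a finite sequence of
edge contractions and neighborhood-minors. -/
inductive CombinatorialRetract : ∀ {V W : Type}, SimpleGraph V → SimpleGraph W → Prop
  | refl {V : Type} (G : SimpleGraph V) : CombinatorialRetract G G
  | contract {V W : Type} (G : SimpleGraph V) (u v : V) (huv : G.Adj u v)
      (G' : SimpleGraph W) (h : CombinatorialRetract (contractEdge G u v) G') :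
      CombinatorialRetract G G'
  | nbhdMinor {V W : Type} (G : SimpleGraph V) (S : Set V)
      (hS : IsNeighborhoodMinor G S) (G' : SimpleGraph W)
      (h : CombinatorialRetract (SimpleGraph.induce S G) G') :
      CombinatorialRetract G G'

/-!
Let `v ∈ W` be adjacent to every vertex of `W` with a neighbour outside `W`, and let `κ : V → W`
fix `W` and send `Wᶜ` to `v`. Then `q_A ↦ q_{A ∩ W}` and `q_B ↦ q_{κ⁻¹ B}` induce
`π : K[G] → K[G_W]` and `ι : K[G_W] → K[G]` with `π ∘ ι = id`. For `π`, setting the variables of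
the edges leaving `G_W` to `1` turns `u_A` into `u_{A ∩ W}`. For `ι`, an edge `xy` of `G` with
`κ x ≠ κ y` is cut by `κ⁻¹ B` iff the edge `κ x κ y` of `G_W` (an edge by the domination
hypothesis) is cut by `B`, while edges with `κ x = κ y` are never cut; so `u_{κ⁻¹ B}` is the image
of `u_B` under the ring map sending `s_e`, `t_e` to the products of the corresponding variables over
the edges above `e`, times a monomial independent of `B`. Hence `ι` respects the cut ideals. If
`G_W` has no edges then `K[G_W] = K` and `ι` is the structure map instead.
In an `H`-sum the vertex `v` dominates the boundary of both `V₁` and `V₂`, which also makes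
`G_{V_i}` a neighborhood-minor.
-/

section Retract

open SimpleGraph

variable {U V : Type}

lemma isCutEdge_mk_iff (A : Set V) (x y : V) :
    IsCutEdge A s(x, y) ↔ (x ∈ A ∧ y ∉ A) ∨ (y ∈ A ∧ x ∉ A) := by
  constructor
  · rintro ⟨u, w, he, hu, hw⟩
    rcases Sym2.eq_iff.mp he with ⟨rfl, rfl⟩ | ⟨rfl, rfl⟩
    exacts [Or.inl ⟨hu, hw⟩, Or.inr ⟨hu, hw⟩]
  · rintro (⟨hx, hy⟩ | ⟨hy, hx⟩)
    exacts [⟨x, y, rfl, hx, hy⟩, ⟨y, x, Sym2.eq_swap, hy, hx⟩]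

lemma isCutEdge_preimage_iff (f : U → V) (A : Set V) (e : Sym2 U) :
    IsCutEdge (f ⁻¹' A) e ↔ IsCutEdge A (e.map f) := by
  induction e using Sym2.ind with
  | _ x y => simp only [Sym2.map_mk, isCutEdge_mk_iff, Set.mem_preimage]

lemma IsCutEdge.not_isDiag {A : Set V} {e : Sym2 V} (h : IsCutEdge A e) : ¬e.IsDiag := by
  obtain ⟨x, y, rfl, hx, hy⟩ := h
  rintro (rfl : x = y)
  exact hy hx

def Partition.comap (f : U → V) : Partition V → Partition U :=
  Quotient.map (f ⁻¹' ·) <| by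
    rintro A B (rfl | rfl)
    exacts [Or.inl rfl, Or.inr Set.preimage_compl]

lemma Partition.comap_id : Partition.comap (id : V → V) = id :=
  funext fun p => Quotient.inductionOn p fun _ => rfl

lemma Partition.comap_comp {T : Type} (f : T → U) (g : U → V) :
    Partition.comap f ∘ Partition.comap g = Partition.comap (g ∘ f) :=
  funext fun p => Quotient.inductionOn p fun _ => rfl

lemma phi_X_mk [Finite V] (G : SimpleGraph V) (A : Set V) :
    phi K G (X (Quotient.mk (partitionSetoid V) A)) = cutMonomial K G A := by
  simp [phi]

lemma cutMonomial_eq_prod [Finite V] (G : SimpleGraph V) (A : Set V) :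
    cutMonomial K G A =
      ∏ e ∈ (Set.toFinite G.edgeSet).toFinset, X (decide (IsCutEdge A e), e) := by
  refine Finset.prod_congr rfl fun e _ => ?_
  by_cases h : IsCutEdge A e <;> simp [h]

def edgeTransfer (w : Sym2 V → MvPolynomial (Bool × Sym2 U) K) (f : U → V)
    (L : Finset (Sym2 U)) :
    MvPolynomial (Bool × Sym2 V) K →ₐ[K] MvPolynomial (Bool × Sym2 U) K :=
  aeval fun be => w be.2 * ∏ e ∈ L with e.map f = be.2, X (be.1, e)

lemma edgeTransfer_cutMonomial [Finite V] (H : SimpleGraph V)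
    (w : Sym2 V → MvPolynomial (Bool × Sym2 U) K) (f : U → V) (L : Finset (Sym2 U))
    (hL : ∀ e ∈ L, e.map f ∈ H.edgeSet) (B : Set V) :
    edgeTransfer K w f L (cutMonomial K H B) =
      (∏ e ∈ (Set.toFinite H.edgeSet).toFinset, w e) *
        ∏ e ∈ L, X (decide (IsCutEdge B (e.map f)), e) := by
  rw [cutMonomial_eq_prod, map_prod]
  simp only [edgeTransfer, aeval_X, Finset.prod_mul_distrib]
  rw [← Finset.prod_fiberwise_of_maps_to (t := (Set.toFinite H.edgeSet).toFinset)
    (fun e he => (Set.Finite.mem_toFinset _).mpr (hL e he))]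
  refine congrArg _ (Finset.prod_congr rfl fun e' _ => Finset.prod_congr rfl fun e he => ?_)
  rw [(Finset.mem_filter.mp he).2]

/-- Edges collapsed by `f` are never cut by a pulled-back partition. -/
lemma cutMonomial_preimage [Finite U] (G : SimpleGraph U) (f : U → V) (B : Set V) :
    cutMonomial K G (f ⁻¹' B) =
      (∏ e ∈ (Set.toFinite G.edgeSet).toFinset with (e.map f).IsDiag, X (false, e)) *
        ∏ e ∈ (Set.toFinite G.edgeSet).toFinset with ¬(e.map f).IsDiag,
          X (decide (IsCutEdge B (e.map f)), e) := by
  rw [cutMonomial_eq_prod, ← Finset.prod_filter_mul_prod_filter_not _ fun e => (e.map f).IsDiag]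
  simp only [isCutEdge_preimage_iff]
  refine congrArg (· * _) (Finset.prod_congr rfl fun e he => ?_)
  have hnot : ¬IsCutEdge B (e.map f) := fun h => h.not_isDiag (Finset.mem_filter.mp he).2
  simp [hnot]

lemma phi_comp_rename_comap [Finite U] [Finite V] (G : SimpleGraph U) (H : SimpleGraph V)
    (f : U → V) (hf : ∀ x y, G.Adj x y → f x ≠ f y → H.Adj (f x) (f y))
    (w : Sym2 V → MvPolynomial (Bool × Sym2 U) K)
    (hw : ∏ e ∈ (Set.toFinite H.edgeSet).toFinset, w e =
      ∏ e ∈ (Set.toFinite G.edgeSet).toFinset with (e.map f).IsDiag, X (false, e)) :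
    (phi K G).comp (rename (Partition.comap f)) =
      (edgeTransfer K w f
        {e ∈ (Set.toFinite G.edgeSet).toFinset | ¬(e.map f).IsDiag}).comp (phi K H) := by
  have hL : ∀ e ∈ {e ∈ (Set.toFinite G.edgeSet).toFinset | ¬(e.map f).IsDiag},
      e.map f ∈ H.edgeSet := by
    intro e he
    induction e using Sym2.ind with
    | _ x y =>
      simp only [Finset.mem_filter, Set.Finite.mem_toFinset, mem_edgeSet, Sym2.map_mk,
        Sym2.mk_isDiag_iff] at he ⊢
      exact hf x y he.1 he.2
  refine algHom_ext fun p => Quotient.inductionOn p fun B => ?_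
  simp only [AlgHom.comp_apply, rename_X]
  rw [phi_X_mk, edgeTransfer_cutMonomial K H w f _ hL, hw]
  exact (phi_X_mk K G (f ⁻¹' B)).trans (cutMonomial_preimage K G f B)

lemma cutIdeal_le_comap_of_phi_comp [Finite U] [Finite V] (G : SimpleGraph U) (H : SimpleGraph V)
    (ψ : MvPolynomial (Partition V) K →ₐ[K] MvPolynomial (Partition U) K)
    (σ : MvPolynomial (Bool × Sym2 V) K →ₐ[K] MvPolynomial (Bool × Sym2 U) K)
    (h : (phi K G).comp ψ = σ.comp (phi K H)) :
    cutIdeal K H ≤ (cutIdeal K G).comap ψ := by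
  intro p hp
  change phi K G (ψ p) = 0
  rw [← AlgHom.comp_apply, h, AlgHom.comp_apply, RingHom.mem_ker.mp hp, map_zero]

lemma cutAlgebraRetract_of_algHom [Finite U] [Finite V] (H : SimpleGraph U) (G : SimpleGraph V)
    (ι : MvPolynomial (Partition U) K →ₐ[K] MvPolynomial (Partition V) K)
    (π : MvPolynomial (Partition V) K →ₐ[K] MvPolynomial (Partition U) K)
    (hι : cutIdeal K H ≤ (cutIdeal K G).comap ι) (hπ : cutIdeal K G ≤ (cutIdeal K H).comap π)
    (hιhom : ∀ d p, IsHomogeneous p d → ∃ d', IsHomogeneous (ι p) d')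
    (hπhom : ∀ d p, IsHomogeneous p d → ∃ d', IsHomogeneous (π p) d')
    (hπι : (phi K H).comp (π.comp ι) = phi K H) :
    CutAlgebraRetract K H G := by
  have hcomp : (Ideal.quotientMapₐ _ π hπ).comp (Ideal.quotientMapₐ _ ι hι) = AlgHom.id K _ := by
    refine Ideal.Quotient.algHom_ext K (algHom_ext fun q => ?_)
    simp only [AlgHom.comp_apply, Ideal.Quotient.mkₐ_eq_mk, Ideal.quotient_map_mkₐ,
      AlgHom.id_apply, Ideal.Quotient.eq]
    have h := congrArg (· (X q)) (congrArg DFunLike.coe hπι)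
    exact RingHom.mem_ker.mpr (by simpa [sub_eq_zero] using h)
  refine ⟨_, _, ?_, ?_, ?_, hcomp⟩
  · exact Function.LeftInverse.injective fun x => congrArg (· x) (congrArg DFunLike.coe hcomp)
  · rintro d _ ⟨p, hp, rfl⟩
    obtain ⟨d', hd'⟩ := hιhom d p hp
    exact ⟨d', ι p, hd', rfl⟩
  · rintro d _ ⟨p, hp, rfl⟩
    obtain ⟨d', hd'⟩ := hπhom d p hp
    exact ⟨d', π p, hd', rfl⟩

lemma cutIdeal_le_comap_rename_restrict [Finite V] (G : SimpleGraph V) (W : Set V) :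
    cutIdeal K G ≤ (cutIdeal K (G.induce W)).comap (rename (Partition.comap Subtype.val)) := by
  refine cutIdeal_le_comap_of_phi_comp K _ _ _ _
    (phi_comp_rename_comap K _ G Subtype.val (fun _ _ h _ => h) 1 ?_)
  rw [Pi.one_def, Finset.prod_const_one, Finset.filter_false_of_mem, Finset.prod_empty]
  intro e he
  rw [Sym2.isDiag_map Subtype.val_injective]
  exact not_isDiag_of_mem_edgeSet _ ((Set.Finite.mem_toFinset _).mp he)

/-- A graph without edges has cut algebra `K`, which is a retract of every cut algebra. -/
lemma cutAlgebraRetract_of_edgeSet_eq_empty [Finite U] [Finite V] (H : SimpleGraph U)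
    (G : SimpleGraph V) (hH : H.edgeSet = ∅)
    (π : MvPolynomial (Partition V) K →ₐ[K] MvPolynomial (Partition U) K)
    (hπ : cutIdeal K G ≤ (cutIdeal K H).comap π)
    (hπhom : ∀ d p, IsHomogeneous p d → ∃ d', IsHomogeneous (π p) d') :
    CutAlgebraRetract K H G := by
  have hone : ∀ B, cutMonomial K H B = 1 := fun B => by
    simp [cutMonomial, hH]
  refine cutAlgebraRetract_of_algHom K H G ((Algebra.ofId K _).comp (aeval fun _ => 1)) π
    (cutIdeal_le_comap_of_phi_comp K G H _ ((Algebra.ofId K _).comp (aeval fun _ => 1)) ?_)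
    hπ (fun _ p _ => ⟨0, isHomogeneous_C _ _⟩) hπhom ?_
  all_goals
    refine algHom_ext fun q => Quotient.inductionOn q fun B => ?_
    simp [phi_X_mk, hone]

/-- `W ∩ N_G(Wᶜ) ⊆ N_G[v]`, the condition in the definition of a neighborhood-minor. -/
def DominatesBoundary (G : SimpleGraph V) (W : Set V) (v : V) : Prop :=
  ∀ x ∈ W, (∃ y ∈ Wᶜ, G.Adj y x) → x = v ∨ G.Adj v x

def collapseTo (W : Set V) (v : W) (x : V) : W :=
  if h : x ∈ W then ⟨x, h⟩ else v

lemma collapseTo_comp_val (W : Set V) (v : W) : collapseTo W v ∘ Subtype.val = id :=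
  funext fun x => dif_pos x.2

lemma DominatesBoundary.induce_adj_collapseTo {G : SimpleGraph V} {W : Set V} {v : V}
    (hdom : DominatesBoundary G W v) (hv : v ∈ W) (x y : V) (hxy : G.Adj x y)
    (hne : collapseTo W ⟨v, hv⟩ x ≠ collapseTo W ⟨v, hv⟩ y) :
    (G.induce W).Adj (collapseTo W ⟨v, hv⟩ x) (collapseTo W ⟨v, hv⟩ y) := by
  have adj_v : ∀ x y, G.Adj x y → x ∈ W → y ∉ W → x ≠ v → G.Adj x v := fun x y hxy hx hy hxv =>
    ((hdom x hx ⟨y, hy, hxy.symm⟩).resolve_left hxv).symm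
  by_cases hx : x ∈ W <;> by_cases hy : y ∈ W <;>
    simp only [collapseTo, hx, hy, dif_pos, dif_neg, not_false_eq_true, ne_eq,
      Subtype.mk.injEq, comap_adj, Function.Embedding.subtype_apply] at hne ⊢
  · exact hxy
  · exact adj_v x y hxy hx hy hne
  · exact (adj_v y x hxy.symm hy hx (Ne.symm hne)).symm
  · exact (hne trivial).elim

lemma cutAlgebraRetract_induce [Finite V] (G : SimpleGraph V) (W : Set V) {v : V} (hv : v ∈ W)
    (hdom : DominatesBoundary G W v) : CutAlgebraRetract K (G.induce W) G := by
  have hπhom : ∀ d p, IsHomogeneous p d → ∃ d',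
      IsHomogeneous (rename (R := K) (Partition.comap (Subtype.val : W → V)) p) d' :=
    fun d _ hp => ⟨d, hp.rename_isHomogeneous⟩
  obtain hE | ⟨e₀, he₀⟩ := (G.induce W).edgeSet.eq_empty_or_nonempty
  · exact cutAlgebraRetract_of_edgeSet_eq_empty K _ G hE _
      (cutIdeal_le_comap_rename_restrict K G W) hπhom
  -- Every `u_B` contains exactly one of `s_{e₀}`, `t_{e₀}`, so weighting `e₀` alone by the
  -- monomial of the collapsed edges produces that monomial exactly once.
  have hι := cutIdeal_le_comap_of_phi_comp K G _ _ _ <|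
    phi_comp_rename_comap K G _ _ (hdom.induce_adj_collapseTo hv) (Pi.mulSingle e₀ _) <| by
      rw [Finset.prod_pi_mulSingle', if_pos ((Set.Finite.mem_toFinset _).mpr he₀)]
  refine cutAlgebraRetract_of_algHom K _ G _ _ hι (cutIdeal_le_comap_rename_restrict K G W)
    (fun d _ hp => ⟨d, hp.rename_isHomogeneous⟩) hπhom ?_
  rw [rename_comp_rename, Partition.comap_comp, collapseTo_comp_val, Partition.comap_id,
    rename_id, AlgHom.comp_id]

lemma dominatesBoundary_sup {G₁ G₂ : SimpleGraph V} {V₁ V₂ : Set V} {v : V}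
    (h₁ : ∀ x y : V, G₁.Adj x y → x ∈ V₁ ∧ y ∈ V₁) (h₂ : ∀ x y : V, G₂.Adj x y → x ∈ V₂ ∧ y ∈ V₂)
    (hdeg : ∀ x ∈ V₁ ∩ V₂, x ≠ v → (G₁ ⊔ G₂).Adj v x) :
    DominatesBoundary (G₁ ⊔ G₂) V₁ v := by
  rintro x hx ⟨y, hy, hyx | hyx⟩
  · exact absurd (h₁ y x hyx).1 hy
  · by_cases hxv : x = v
    exacts [Or.inl hxv, Or.inr (hdeg x ⟨hx, (h₂ y x hyx).2⟩ hxv)]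

end Retract

theorem stmt5_general {V : Type} [Fintype V] (K : Type) [Field K]
    (G₁ G₂ : SimpleGraph V) (V₁ V₂ : Set V)
    (h₁ : ∀ x y : V, G₁.Adj x y → x ∈ V₁ ∧ y ∈ V₁)
    (h₂ : ∀ x y : V, G₂.Adj x y → x ∈ V₂ ∧ y ∈ V₂)
    (v : V) (hv : v ∈ V₁ ∩ V₂)
    (hdeg : ∀ x ∈ V₁ ∩ V₂, x ≠ v → G₁.Adj v x) :
    (CutAlgebraRetract K (SimpleGraph.induce V₁ (G₁ ⊔ G₂)) (G₁ ⊔ G₂) ∧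
      CutAlgebraRetract K (SimpleGraph.induce V₂ (G₁ ⊔ G₂)) (G₁ ⊔ G₂)) ∧
    ((V₂ \ V₁).Nonempty → IsNeighborhoodMinor (G₁ ⊔ G₂) V₁) ∧
    ((V₁ \ V₂).Nonempty → IsNeighborhoodMinor (G₁ ⊔ G₂) V₂) := by
  have hdom₁ : DominatesBoundary (G₁ ⊔ G₂) V₁ v :=
    dominatesBoundary_sup h₁ h₂ fun x hx hxv => Or.inl (hdeg x hx hxv)
  have hdom₂ : DominatesBoundary (G₁ ⊔ G₂) V₂ v := by
    rw [sup_comm]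
    exact dominatesBoundary_sup h₂ h₁ fun x hx hxv => Or.inr (hdeg x hx.symm hxv)
  refine ⟨⟨cutAlgebraRetract_induce K _ V₁ hv.1 hdom₁, cutAlgebraRetract_induce K _ V₂ hv.2 hdom₂⟩,
    ?_, ?_⟩
  · rintro ⟨w, -, hw⟩
    exact ⟨⟨v, hv.1⟩, ⟨w, hw⟩, v, hv.1, hdom₁⟩
  · rintro ⟨w, -, hw⟩
    exact ⟨⟨v, hv.2⟩, ⟨w, hw⟩, v, hv.2, hdom₂⟩

theorem stmt5 {V : Type} [Fintype V] (K : Type) [Field K]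
    (G₁ G₂ : SimpleGraph V) (V₁ V₂ : Set V)
    (hcover : V₁ ∪ V₂ = Set.univ)
    (h₁ : ∀ x y : V, G₁.Adj x y → x ∈ V₁ ∧ y ∈ V₁)
    (h₂ : ∀ x y : V, G₂.Adj x y → x ∈ V₂ ∧ y ∈ V₂)
    (hH : ∀ x ∈ V₁ ∩ V₂, ∀ y ∈ V₁ ∩ V₂, (G₁.Adj x y ↔ G₂.Adj x y))
    (v : V) (hv : v ∈ V₁ ∩ V₂)
    (hdeg : ∀ x ∈ V₁ ∩ V₂, x ≠ v → G₁.Adj v x) :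
    (CutAlgebraRetract K (SimpleGraph.induce V₁ (G₁ ⊔ G₂)) (G₁ ⊔ G₂) ∧
      CutAlgebraRetract K (SimpleGraph.induce V₂ (G₁ ⊔ G₂)) (G₁ ⊔ G₂)) ∧
    ((V₂ \ V₁).Nonempty → IsNeighborhoodMinor (G₁ ⊔ G₂) V₁) ∧
    ((V₁ \ V₂).Nonempty → IsNeighborhoodMinor (G₁ ⊔ G₂) V₂) :=
  stmt5_general K G₁ G₂ V₁ V₂ h₁ h₂ v hv hdeg

end CutPaper
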